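/- Let r ≥ 1 and λ̃ ≥ 1 be integers, λ = rλ̃ − r + 1, and let v ∈ ℝ^λ be the ΣΔ condensation vector. For any positive integer p, set m = pλ, let V = I_p ⊗ v ∈ ℝ^{p×m}, and let D ∈ ℝ^{m×m} be the first-order difference matrix. Then for every u ∈ ℝ^m and every j ∈ {1,…,p}, the j-th entry of VD^r u satisfies |(VD^r u)_j| ≤ r·2^{3r−1}·‖u‖_∞; equivalently, ‖VD^r‖_{∞→∞} ≤ r·2^{3r−1}. -/

import Mathlib

open scoped BigOperators
noncomputable section

/-- The ΣΔ condensation vector: the `j`-th entry (0-indexed) is the coefficient of `z^j`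
in the polynomial `(1 + z + ⋯ + z^(lamt-1))^r`. -/
def sdVec (r lamt : ℕ) {lam : ℕ} : Fin lam → ℝ :=
  fun j => ((∑ t ∈ Finset.range lamt, (Polynomial.X : Polynomial ℝ) ^ t) ^ r).coeff (j : ℕ)

/-- Block-diagonal matrix `I_p ⊗ v` with `p` copies of the row vector `v` on the diagonal. -/
def kronRow (p : ℕ) {lam : ℕ} (v : Fin lam → ℝ) : Matrix (Fin p) (Fin (p * lam)) ℝ :=
  Matrix.of fun i j =>
    if (j : ℕ) / lam = (i : ℕ) then
      (if h2 : (j : ℕ) % lam < lam then v ⟨(j : ℕ) % lam, h2⟩ else 0)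
    else 0

/-- The `m×m` first-order difference matrix. -/
def diffMat (m : ℕ) : Matrix (Fin m) (Fin m) ℝ :=
  Matrix.of fun i j =>
    if (i : ℕ) = (j : ℕ) then 1 else if (i : ℕ) = (j : ℕ) + 1 then -1 else 0

/-- `ℓ∞` norm of a real vector. -/
def normInf {n : ℕ} (x : Fin n → ℝ) : ℝ := ⨆ j, |x j|

/-- The `∞ → ∞` operator norm `‖M‖_{∞→∞} = sup {‖Mx‖_∞ : ‖x‖_∞ ≤ 1}`. -/
def opNormInfInf {p m : ℕ} (M : Matrix (Fin p) (Fin m) ℝ) : ℝ :=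
  sSup {c : ℝ | ∃ x : Fin m → ℝ, normInf x ≤ 1 ∧ c = normInf (M.mulVec x)}

open Polynomial Finset Function Matrix

/-! Row `j` of `V` is the coefficient sequence of `X ^ (j * λ) * P`, where
`P = (1 + X + ⋯ + X ^ (λ̃ - 1)) ^ r`, and right multiplication by `D` turns the coefficient row
of a polynomial `g` into that of `(X - 1) * g`, shifted by one place. Hence row `j` of `V D^r`
lists coefficients of `X ^ (j * λ) * (X - 1) ^ r * P = X ^ (j * λ) * (X ^ λ̃ - 1) ^ r`, whose
absolute values sum to at most `2 ^ r` by the binomial theorem. So every row of `V D^r` has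
`ℓ¹` norm at most `2 ^ r ≤ r * 2 ^ (3 * r - 1)`. -/

theorem coeff_X_sub_one_mul_succ (g : ℝ[X]) (k : ℕ) :
    ((X - 1) * g).coeff (k + 1) = g.coeff k - g.coeff (k + 1) := by
  simpa using coeff_X_sub_C_mul (p := g) (r := 1) (a := k)

theorem natDegree_X_sub_one_pow_mul_le (g : ℝ[X]) (n : ℕ) :
    ((X - 1) ^ n * g).natDegree ≤ n + g.natDegree := by
  have h : (X - 1 : ℝ[X]).natDegree = 1 := by simpa using natDegree_X_sub_C (1 : ℝ)
  refine natDegree_mul_le.trans (Nat.add_le_add_right (natDegree_pow_le.trans ?_) _)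
  rw [h, mul_one]

theorem vecMul_diffMat {m n : ℕ} {g : ℝ[X]} (hg : g.natDegree < m + n) :
    (fun l : Fin m => g.coeff (l + n)) ᵥ* diffMat m
      = fun l => ((X - 1) * g).coeff (l + (n + 1)) := by
  ext l
  have hD : ∀ k : Fin m, diffMat m k l
      = (if (k : ℕ) = l then 1 else 0) - (if (k : ℕ) = l + 1 then 1 else 0) := by
    intro k
    by_cases h : (k : ℕ) = l
    · simp [diffMat, h]
    · simp only [diffMat, h, of_apply, if_false]; split_ifs <;> simp
  -- the last column of `D` has no `-1`; the coefficient it would pick up is beyond `g`'s degree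
  have hlast : g.coeff (m + n) = 0 := coeff_eq_zero_of_natDegree_lt hg
  rw [← add_assoc, coeff_X_sub_one_mul_succ]
  simp only [vecMul, dotProduct, hD, mul_sub, mul_ite, mul_one, mul_zero, sum_sub_distrib]
  rw [Fin.sum_univ_eq_sum_range (fun k => if k = (l : ℕ) then g.coeff (k + n) else 0),
    Fin.sum_univ_eq_sum_range (fun k => if k = (l : ℕ) + 1 then g.coeff (k + n) else 0),
    sum_ite_eq', sum_ite_eq', if_pos (mem_range.2 l.2)]
  by_cases hl : (l : ℕ) + 1 < m
  · rw [if_pos (mem_range.2 hl), add_right_comm]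
  · rw [if_neg (by simpa using hl), show (l : ℕ) + n + 1 = m + n by omega, hlast]

theorem vecMul_diffMat_pow {m : ℕ} {g : ℝ[X]} (hg : g.natDegree < m) (n : ℕ) :
    (fun l : Fin m => g.coeff l) ᵥ* diffMat m ^ n
      = fun l => ((X - 1) ^ n * g).coeff (l + n) := by
  induction n with
  | zero => simp
  | succ n ih =>
    have hdeg : ((X - 1) ^ n * g).natDegree < m + n :=
      (natDegree_X_sub_one_pow_mul_le g n).trans_lt (by omega)
    rw [pow_succ, ← vecMul_vecMul, ih, vecMul_diffMat hdeg, pow_succ', mul_assoc]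

theorem kronRow_coeff {p lam : ℕ} {g : ℝ[X]} (hg : g.natDegree < lam) (j : Fin p) :
    kronRow p (fun i : Fin lam => g.coeff i) j = fun l => (X ^ (j * lam) * g).coeff l := by
  funext l
  simp only [kronRow, of_apply, dif_pos (Nat.mod_lt _ (Nat.zero_lt_of_lt hg)), coeff_X_pow_mul']
  by_cases hdiv : (l : ℕ) / lam = j
  · have hle : (j : ℕ) * lam ≤ l := hdiv ▸ Nat.div_mul_le_self _ _
    rw [if_pos hdiv, if_pos hle, Nat.mod_eq_sub_mul_div, hdiv, Nat.mul_comm lam]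
  · rw [if_neg hdiv]
    split_ifs with hle
    · refine (coeff_eq_zero_of_natDegree_lt (hg.trans_le ?_)).symm
      by_contra! hlt
      exact hdiv (Nat.div_eq_of_lt_le hle (by rw [add_mul]; omega))
    · rfl

theorem kronRow_mul_diffMat_pow {p lam : ℕ} {g : ℝ[X]} (hg : g.natDegree < lam) (n : ℕ)
    (j : Fin p) :
    (kronRow p (fun i : Fin lam => g.coeff i) * diffMat (p * lam) ^ n) j
      = fun l => ((X - 1) ^ n * (X ^ (j * lam) * g)).coeff (l + n) := by
  have hdeg : (X ^ (j * lam) * g).natDegree < p * lam :=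
    calc (X ^ (j * lam) * g).natDegree ≤ j * lam + g.natDegree :=
          natDegree_mul_le.trans (Nat.add_le_add_right (natDegree_X_pow_le _) _)
      _ < (j + 1) * lam := by rw [add_one_mul]; exact Nat.add_lt_add_left hg _
      _ ≤ p * lam := Nat.mul_le_mul_right _ j.2
  rw [mul_apply_eq_vecMul, kronRow_coeff hg, vecMul_diffMat_pow hdeg]

theorem sum_abs_coeff_sum_C_mul_X_pow_le {ι κ : Type*} [Fintype κ] (s : Finset ι) (c : ι → ℝ)
    (e : ι → ℕ) {f : κ → ℕ} (hf : Injective f) :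
    ∑ l, |(∑ q ∈ s, C (c q) * X ^ (e q)).coeff (f l)| ≤ ∑ q ∈ s, |c q| := by
  have hfiber : ∀ q, #{l | f l = e q} ≤ 1 := fun q =>
    card_le_one.2 fun a ha b hb => hf ((mem_filter.1 ha).2.trans (mem_filter.1 hb).2.symm)
  simp only [finsetSum_coeff, coeff_C_mul_X_pow]
  calc ∑ l, |∑ q ∈ s, if f l = e q then c q else 0|
      ≤ ∑ l, ∑ q ∈ s, |if f l = e q then c q else 0| :=
        sum_le_sum fun l _ => abs_sum_le_sum_abs _ _
    _ = ∑ q ∈ s, ∑ l, if f l = e q then |c q| else 0 := by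
        rw [sum_comm]; simp only [apply_ite abs, abs_zero]
    _ ≤ ∑ q ∈ s, |c q| := sum_le_sum fun q _ => by
        rw [sum_ite, sum_const_zero, add_zero, sum_const, nsmul_eq_mul]
        exact mul_le_of_le_one_left (abs_nonneg _) (by exact_mod_cast hfiber q)

theorem sum_abs_coeff_X_pow_mul_X_pow_sub_one_pow_le {κ : Type*} [Fintype κ] {f : κ → ℕ}
    (hf : Injective f) (a b r : ℕ) :
    ∑ l, |(X ^ a * (X ^ b - 1 : ℝ[X]) ^ r).coeff (f l)| ≤ 2 ^ r := by
  have hexpand : X ^ a * (X ^ b - 1 : ℝ[X]) ^ r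
      = ∑ q ∈ range (r + 1), C ((-1 : ℝ) ^ (q + r) * r.choose q) * X ^ (a + b * q) := by
    rw [sub_pow, mul_sum]
    refine sum_congr rfl fun q _ => ?_
    simp only [one_pow, mul_one, map_mul, map_pow, map_neg, map_one, C_eq_natCast, pow_add,
      pow_mul]
    ring
  rw [hexpand]
  refine (sum_abs_coeff_sum_C_mul_X_pow_le _ _ _ hf).trans_eq ?_
  simp only [abs_mul, abs_pow, abs_neg, abs_one, one_pow, one_mul, Nat.abs_cast]
  exact_mod_cast Nat.sum_range_choose r

theorem natDegree_geom_sum_pow_lt (b r : ℕ) :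
    ((∑ t ∈ range b, X ^ t : ℝ[X]) ^ r).natDegree < r * b - r + 1 := by
  have hgeom : (∑ t ∈ range b, X ^ t : ℝ[X]).natDegree ≤ b - 1 :=
    natDegree_sum_le_of_forall_le _ _ fun t ht => by
      simpa using Nat.le_sub_one_of_lt (mem_range.1 ht)
  calc _ ≤ r * (b - 1) := natDegree_pow_le.trans (Nat.mul_le_mul_left r hgeom)
    _ < r * b - r + 1 := by rw [Nat.mul_sub_one]; omega

theorem sum_abs_kronRow_sdVec_mul_diffMat_pow_le {r lamt lam p : ℕ}
    (hlam : lam = r * lamt - r + 1) (j : Fin p) :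
    ∑ l, |(kronRow p (sdVec r lamt : Fin lam → ℝ) * diffMat (p * lam) ^ r) j l| ≤ 2 ^ r := by
  set P : ℝ[X] := (∑ t ∈ range lamt, X ^ t) ^ r
  have hP : P.natDegree < lam := hlam ▸ natDegree_geom_sum_pow_lt lamt r
  have hfactor : (X - 1) ^ r * (X ^ (j * lam) * P) = X ^ (j * lam) * (X ^ lamt - 1) ^ r := by
    rw [mul_left_comm, ← mul_pow, mul_comm (X - 1), geom_sum_mul]
  rw [show sdVec r lamt = fun i : Fin lam => P.coeff i from rfl, kronRow_mul_diffMat_pow hP]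
  simp only [hfactor]
  exact sum_abs_coeff_X_pow_mul_X_pow_sub_one_pow_le
    ((add_left_injective r).comp Fin.val_injective) _ _ _

theorem abs_le_normInf {n : ℕ} (x : Fin n → ℝ) (i : Fin n) : |x i| ≤ normInf x :=
  le_ciSup (f := fun i => |x i|) (Set.finite_range _).bddAbove i

theorem normInf_nonneg {n : ℕ} (x : Fin n → ℝ) : 0 ≤ normInf x :=
  Real.iSup_nonneg fun i => abs_nonneg (x i)

theorem abs_mulVec_apply_le {p m : ℕ} (M : Matrix (Fin p) (Fin m) ℝ) (u : Fin m → ℝ)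
    (j : Fin p) :
    |(M *ᵥ u) j| ≤ (∑ l, |M j l|) * normInf u :=
  calc |(M *ᵥ u) j| = |∑ l, M j l * u l| := rfl
    _ ≤ ∑ l, |M j l * u l| := abs_sum_le_sum_abs _ _
    _ ≤ ∑ l, |M j l| * normInf u := sum_le_sum fun l _ => by
        rw [abs_mul]; exact mul_le_mul_of_nonneg_left (abs_le_normInf u l) (abs_nonneg _)
    _ = (∑ l, |M j l|) * normInf u := (sum_mul _ _ _).symm

theorem opNormInfInf_le {p m : ℕ} {M : Matrix (Fin p) (Fin m) ℝ} {c : ℝ} (hc : 0 ≤ c)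
    (hM : ∀ u j, |(M *ᵥ u) j| ≤ c * normInf u) : opNormInfInf M ≤ c := by
  refine Real.sSup_le ?_ hc
  rintro _ ⟨u, hu, rfl⟩
  exact Real.iSup_le (fun j => (hM u j).trans (mul_le_of_le_one_right hc hu)) hc

theorem stmt3_general (r lamt : ℕ) (hr : 1 ≤ r)
    (lam : ℕ) (hlam : lam = r * lamt - r + 1) (p : ℕ)
    (v : Fin lam → ℝ) (hv : v = sdVec r lamt)
    (V : Matrix (Fin p) (Fin (p * lam)) ℝ) (hV : V = kronRow p v) :
    (∀ (u : Fin (p * lam) → ℝ) (j : Fin p),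
        |((V * (diffMat (p * lam)) ^ r).mulVec u) j|
          ≤ (r : ℝ) * 2 ^ (3 * r - 1) * normInf u) ∧
    opNormInfInf (V * (diffMat (p * lam)) ^ r) ≤ (r : ℝ) * 2 ^ (3 * r - 1) := by
  subst hv
  have hweaken : (2 : ℝ) ^ r ≤ r * 2 ^ (3 * r - 1) :=
    calc (2 : ℝ) ^ r ≤ 2 ^ (3 * r - 1) := pow_le_pow_right₀ one_le_two (by omega)
      _ ≤ r * 2 ^ (3 * r - 1) := le_mul_of_one_le_left (by positivity) (by exact_mod_cast hr)
  have hentry : ∀ u j, |((V * diffMat (p * lam) ^ r) *ᵥ u) j|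
      ≤ r * 2 ^ (3 * r - 1) * normInf u := fun u j =>
    (abs_mulVec_apply_le _ u j).trans <| mul_le_mul_of_nonneg_right
      ((hV ▸ sum_abs_kronRow_sdVec_mul_diffMat_pow_le hlam j).trans hweaken) (normInf_nonneg u)
  exact ⟨hentry, opNormInfInf_le (by positivity) hentry⟩

/-- with `v` the ΣΔ condensation vector, `V = I_p ⊗ v` and `D` the
first-order difference matrix, every entry of `V D^r u` is at most `r·2^{3r-1}·‖u‖_∞`
in absolute value; equivalently `‖V D^r‖_{∞→∞} ≤ r·2^{3r-1}`. -/
theorem stmt3 (r lamt : ℕ) (hr : 1 ≤ r) (hlamt : 1 ≤ lamt)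
    (lam : ℕ) (hlam : lam = r * lamt - r + 1) (p : ℕ) (hp : 0 < p)
    (v : Fin lam → ℝ) (hv : v = sdVec r lamt)
    (V : Matrix (Fin p) (Fin (p * lam)) ℝ) (hV : V = kronRow p v) :
    (∀ (u : Fin (p * lam) → ℝ) (j : Fin p),
        |((V * (diffMat (p * lam)) ^ r).mulVec u) j|
          ≤ (r : ℝ) * 2 ^ (3 * r - 1) * normInf u) ∧
    opNormInfInf (V * (diffMat (p * lam)) ^ r) ≤ (r : ℝ) * 2 ^ (3 * r - 1) :=
  stmt3_general r lamt hr lam hlam p v hv V hV
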